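/- arXiv:2011.01133 — 2 statements merged into one kernel-verified Lean document; each statement's English description precedes it below -/
import Mathlib

section
/- Let x be an n-dimensional observable on the k-perfect MV-algebra M = Γ(ℤ ⋉ G,(k,0)) and let F = F_x be its spectral resolution. Then T_k is nonempty, T_k has exactly one characteristic point t⁰ = (t⁰_1,…,t⁰_n), and T_k = (t⁰_1,+∞) × ⋯ × (t⁰_n,+∞). -/
open Function Set

/-- A partially ordered set is Dedekind σ-complete if every monotone increasing
sequence bounded above has a supremum. -/
def DedekindSigmaComplete (G : Type*) [Preorder G] : Prop :=
  ∀ f : ℕ → G, Monotone f → BddAbove (Set.range f) → ∃ g, IsLUB (Set.range f) g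

section Lexi

variable {H : Type*} [AddCommGroup H] [LinearOrder H] [IsOrderedAddMonoid H]
variable {G : Type*} [AddCommGroup G] [Lattice G] [CovariantClass G G (· + ·) (· ≤ ·)]

/-- `u` is a strong unit of `H`. -/
def IsStrongUnit (u : H) : Prop := ∀ h : H, ∃ n : ℕ, 0 < n ∧ h ≤ n • u

/-- The underlying set of the lexicographic MV-algebra `Γ(H ⋉ G, (u,0))`. -/
def MSet (u : H) : Set (H ×ₗ G) := Set.Icc (toLex ((0 : H), (0 : G))) (toLex (u, (0 : G)))

/-- `M_h`: the elements of `M` whose first coordinate is `h`. -/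
def MLevel (u h : H) : Set (H ×ₗ G) := {z ∈ MSet (G := G) u | (ofLex z).1 = h}

/-- A sequence of elements of `M` is summable if all its finite partial sums lie in `M`. -/
def SummableSeq (u : H) (a : ℕ → H ×ₗ G) : Prop := ∀ F : Finset ℕ, ∑ m ∈ F, a m ∈ MSet u

/-- `x` is an `n`-dimensional observable on `Γ(H ⋉ G, (u,0))`. -/
def IsObservable (u : H) (n : ℕ) (x : Set (Fin n → ℝ) → H ×ₗ G) : Prop :=
  (∀ A : Set (Fin n → ℝ), MeasurableSet A → x A ∈ MSet u) ∧
  x Set.univ = toLex (u, (0 : G)) ∧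
  ∀ A : ℕ → Set (Fin n → ℝ), (∀ m, MeasurableSet (A m)) → Pairwise (Disjoint on A) →
    (∀ F : Finset ℕ, ∑ m ∈ F, x (A m) ∈ MSet u) ∧
    IsLUB {y | ∃ F : Finset ℕ, y = ∑ m ∈ F, x (A m)} (x (⋃ m, A m))

/-- The spectral resolution `F_x` of an observable `x`. -/
def specRes {n : ℕ} (x : Set (Fin n → ℝ) → H ×ₗ G) : (Fin n → ℝ) → H ×ₗ G :=
  fun t => x {s | ∀ i, s i < t i}

/-- The increment `V(F,[a,b))`. -/
def boxSum {n : ℕ} (F : (Fin n → ℝ) → H ×ₗ G) (a b : Fin n → ℝ) : H ×ₗ G :=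
  ∑ S : Finset (Fin n), ((-1 : ℤ) ^ (n - S.card)) • F (fun i => if i ∈ S then b i else a i)

/-- `F` is an `n`-dimensional spectral resolution on `Γ(H ⋉ G, (u,0))`. -/
def IsSpectralResolution (u : H) (n : ℕ) (F : (Fin n → ℝ) → H ×ₗ G) : Prop :=
  Monotone F ∧
  IsLUB (Set.range F) (toLex (u, (0 : G))) ∧
  (∀ t : Fin n → ℝ, IsLUB {y | ∃ s : Fin n → ℝ, (∀ i, s i < t i) ∧ y = F s} (F t)) ∧
  (∀ (i : Fin n) (s : Fin n → ℝ),
      IsGLB {y | ∃ r : ℝ, y = F (Function.update s i r)} (toLex ((0 : H), (0 : G)))) ∧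
  (∀ a b : Fin n → ℝ, a ≤ b →
      toLex ((0 : H), (0 : G)) ≤ boxSum F a b ∧ boxSum F a b ≤ toLex (u, (0 : G)))

/-- `T_h = {s ∈ ℝⁿ : F s ∈ M_h}`. -/
def TSet (u : H) {n : ℕ} (F : (Fin n → ℝ) → H ×ₗ G) (h : H) : Set (Fin n → ℝ) :=
  {s | F s ∈ MLevel u h}

/-- The projection `π_j^h(s)`. -/
noncomputable def proj (u : H) {n : ℕ} (F : (Fin n → ℝ) → H ×ₗ G) (h : H)
    (s : Fin n → ℝ) (j : Fin n) : ℝ :=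
  sInf {r : ℝ | Function.update s j r ∈ TSet u F h}

/-- The characteristic point `π_h(s)` associated to `s ∈ T_h`. -/
noncomputable def charPt (u : H) {n : ℕ} (F : (Fin n → ℝ) → H ×ₗ G) (h : H)
    (s : Fin n → ℝ) : Fin n → ℝ :=
  fun j => proj u F h s j

/-- The set of characteristic points of `T_h`. -/
def charPts (u : H) {n : ℕ} (F : (Fin n → ℝ) → H ×ₗ G) (h : H) : Set (Fin n → ℝ) :=
  charPt u F h '' TSet u F h

/-- The set of all characteristic points of `F`. -/
def charPoints (u : H) {n : ℕ} (F : (Fin n → ℝ) → H ×ₗ G) : Set (Fin n → ℝ) :=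
  {p | ∃ h : H, 0 < h ∧ h ≤ u ∧ p ∈ charPts u F h}

/-- A block of some `T_h`, `0 < h ≤ u`. -/
def IsBlock (u : H) {n : ℕ} (F : (Fin n → ℝ) → H ×ₗ G) (C : Set (Fin n → ℝ)) : Prop :=
  ∃ h : H, 0 < h ∧ h ≤ u ∧ ∃ s ∈ TSet u F h,
    C = {t ∈ TSet u F h | charPt u F h t = charPt u F h s}

/-- A `T_0`-adjoined block. -/
def IsT0AdjBlock (u : H) {n : ℕ} (F : (Fin n → ℝ) → H ×ₗ G) (C : Set (Fin n → ℝ)) : Prop :=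
  ∃ h : H, 0 < h ∧ h ≤ u ∧ (∃ s ∈ TSet u F h,
    C = {t ∈ TSet u F h | charPt u F h t = charPt u F h s}) ∧
    ∀ t ∈ C, ∀ j : Fin n, Function.update t j (proj u F h t j) ∈ TSet u F 0

end Lexi

/-! The first coordinate of `x A` is a finitely additive `ℤ`-valued level of `A`. Since `ℤ` is
discrete and an ordered group has no least element unless it is trivial, a supremum in `ℤ ×ₗ G`
has the level of one of the elements it bounds, so along an increasing union the level is
reached at a finite stage. Hence the set `T` of points whose box has the top level `k` is
nonempty, upward closed, closed under `⊓` (modular law), open to the left in each coordinate,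
and contains no coordinate line (continuity at `∅` from above, using `k > 0`). Such a subset
of `ℝⁿ` is the open orthant above its coordinatewise infimum `t0`, and `t0` is then the
characteristic point of every point of `T`. -/

section Box

variable {ι : Type*} {T : Set (ι → ℝ)}

theorem lowerBounds_eval_image_of_update_notMem [DecidableEq ι] (hup : IsUpperSet T)
    (hinf : InfClosed T) {s : ι → ℝ} (hs : s ∈ T) {j : ι} {r : ℝ} (hr : update s j r ∉ T) :
    r ∈ lowerBounds ((fun p => p j) '' T) := by
  rintro _ ⟨p, hp, rfl⟩
  by_contra! hpr
  refine hr (hup ?_ (hinf hp hs))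
  rw [le_update_iff]
  exact ⟨inf_le_left.trans hpr.le, fun i _ => inf_le_right⟩

theorem exists_eq_setOf_lt_of_isUpperSet [Fintype ι] (hne : T.Nonempty) (hup : IsUpperSet T)
    (hinf : InfClosed T) (hopen : ∀ p ∈ T, ∀ j, ∃ q ∈ T, q j < p j)
    (hbdd : ∀ j, BddBelow ((fun p => p j) '' T)) :
    ∃ t0 : ι → ℝ, T = {p | ∀ i, t0 i < p i} := by
  classical
  refine ⟨fun j => sInf ((fun p => p j) '' T), Set.ext fun p => ⟨fun hp j => ?_, fun hp => ?_⟩⟩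
  · obtain ⟨q, hq, hqp⟩ := hopen p hp j
    exact (csInf_le (hbdd j) (mem_image_of_mem _ hq)).trans_lt hqp
  · have hwit : ∀ j, ∃ q ∈ T, q j < p j := fun j => by
      obtain ⟨_, ⟨q, hq, rfl⟩, hqp⟩ := exists_lt_of_csInf_lt (hne.image _) (hp j)
      exact ⟨q, hq, hqp⟩
    choose q hqT hqp using hwit
    obtain ⟨s, hs⟩ := hne
    -- `insert s` keeps the meet nonempty when `ι` is empty
    set w := (insert s (Finset.univ.image q)).inf' (Finset.insert_nonempty _ _) id
    have hw : w ∈ T := hinf.finsetInf'_mem _ (by simpa [Finset.forall_mem_insert] using ⟨hs, hqT⟩)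
    refine hup (fun j => ?_) hw
    have hwq : w ≤ q j := Finset.inf'_le _ (by simp)
    exact (hwq j).trans (hqp j).le

theorem measurableSet_setOf_forall_lt [Countable ι] (t : ι → ℝ) :
    MeasurableSet {s : ι → ℝ | ∀ i, s i < t i} := by
  simpa [Set.pi] using MeasurableSet.univ_pi fun i => measurableSet_Iio (a := t i)

end Box

section CharPt

variable {H : Type*} [AddCommGroup H] [LinearOrder H]
variable {G : Type*} [AddCommGroup G] [Lattice G]

theorem charPts_eq_singleton_of_TSet_eq {u h : H} {n : ℕ} {F : (Fin n → ℝ) → H ×ₗ G}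
    {t0 : Fin n → ℝ} (hT : TSet u F h = {p | ∀ i, t0 i < p i}) (hne : (TSet u F h).Nonempty) :
    charPts u F h = {t0} := by
  have hchar : ∀ s ∈ TSet u F h, charPt u F h s = t0 := by
    intro s hs
    funext j
    have hline : {r : ℝ | update s j r ∈ TSet u F h} = Ioi (t0 j) := by
      ext r
      rw [hT] at hs ⊢
      refine ⟨fun hr => by simpa using hr j, fun hr i => ?_⟩
      rcases eq_or_ne i j with rfl | hij
      · simpa using hr
      · simpa [hij] using hs i
    simp only [charPt, proj, hline, csInf_Ioi]
  obtain ⟨s, hs⟩ := hne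
  exact eq_singleton_iff_unique_mem.mpr
    ⟨⟨s, hs, hchar s hs⟩, by rintro _ ⟨t, ht, rfl⟩; exact hchar t ht⟩

end CharPt

namespace IsObservable

variable {H : Type*} [AddCommGroup H] [LinearOrder H] {G : Type*} [AddCommGroup G] [Lattice G]
variable {u : H} {n : ℕ} {x : Set (Fin n → ℝ) → H ×ₗ G} {A B : Set (Fin n → ℝ)}

theorem nonneg (hx : IsObservable u n x) (hA : MeasurableSet A) : 0 ≤ x A := (hx.1 A hA).1

theorem le_top (hx : IsObservable u n x) (hA : MeasurableSet A) : x A ≤ toLex (u, (0 : G)) :=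
  (hx.1 A hA).2

theorem isLUB_iUnion (hx : IsObservable u n x) {D : ℕ → Set (Fin n → ℝ)}
    (hD : ∀ m, MeasurableSet (D m)) (hdisj : Pairwise (Disjoint on D)) :
    IsLUB {y | ∃ F : Finset ℕ, y = ∑ m ∈ F, x (D m)} (x (⋃ m, D m)) :=
  (hx.2.2 D hD hdisj).2

variable [IsOrderedAddMonoid H] [IsOrderedAddMonoid G]

theorem map_empty (hx : IsObservable u n x) : x ∅ = 0 := by
  have hlub := hx.isLUB_iUnion (fun _ => MeasurableSet.empty) (by simp [Pairwise, onFun])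
  rw [iUnion_empty] at hlub
  have hdouble : x ∅ + x ∅ ≤ x ∅ := hlub.1 ⟨{0, 1}, by simp [two_smul]⟩
  exact le_antisymm (add_le_iff_nonpos_left.mp hdouble) (hx.nonneg MeasurableSet.empty)

theorem map_union (hx : IsObservable u n x) (hA : MeasurableSet A) (hB : MeasurableSet B)
    (hAB : Disjoint A B) : x (A ∪ B) = x A + x B := by
  classical
  set D : ℕ → Set (Fin n → ℝ) := fun m => if m = 0 then A else if m = 1 then B else ∅
  have hD : ∀ m, MeasurableSet (D m) := fun m => by
    simp only [D]; split_ifs <;> first | assumption | exact .empty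
  have hdisj : Pairwise (Disjoint on D) := fun i j hij => by
    simp only [onFun, D]; split_ifs <;> simp_all [hAB.symm]
  have hunion : (⋃ m, D m) = A ∪ B := by
    refine Subset.antisymm (iUnion_subset fun m => ?_) (union_subset ?_ ?_)
    · simp only [D]; split_ifs <;> simp
    · exact subset_iUnion_of_subset 0 (by simp [D])
    · exact subset_iUnion_of_subset 1 (by simp [D])
  have hpair : ∑ m ∈ {0, 1}, x (D m) = x A + x B := by simp [D]
  have hlub := hx.isLUB_iUnion hD hdisj
  rw [hunion] at hlub
  -- only the indices `0` and `1` contribute to a finite sum, so `x A + x B` is the largest one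
  refine hlub.unique (IsGreatest.isLUB ⟨⟨{0, 1}, hpair.symm⟩, ?_⟩)
  rintro _ ⟨F, rfl⟩
  calc ∑ m ∈ F, x (D m) ≤ ∑ m ∈ F ∪ {0, 1}, x (D m) :=
        Finset.sum_le_sum_of_subset_of_nonneg Finset.subset_union_left
          fun m _ _ => hx.nonneg (hD m)
    _ = x A + x B := by
        rw [← hpair]
        refine (Finset.sum_subset Finset.subset_union_right fun m _ hm => ?_).symm
        simp only [Finset.mem_insert, Finset.mem_singleton, not_or] at hm
        simp [D, hm.1, hm.2, hx.map_empty]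

theorem mono (hx : IsObservable u n x) (hA : MeasurableSet A) (hB : MeasurableSet B)
    (hAB : A ⊆ B) : x A ≤ x B := by
  rw [← union_sdiff_cancel hAB, hx.map_union hA (hB.diff hA) disjoint_sdiff_self_right]
  exact le_add_of_nonneg_right (hx.nonneg (hB.diff hA))

theorem map_union_add_map_inter (hx : IsObservable u n x) (hA : MeasurableSet A)
    (hB : MeasurableSet B) : x (A ∪ B) + x (A ∩ B) = x A + x B := by
  have hunion : x (A ∪ B) = x A + x (B \ A) := by
    rw [← hx.map_union hA (hB.diff hA) disjoint_sdiff_self_right, union_sdiff_self]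
  have hsplit : x B = x (A ∩ B) + x (B \ A) := by
    rw [← hx.map_union (hA.inter hB) (hB.diff hA) (disjoint_sdiff_self_right.mono_left
      inter_subset_left), inter_comm, inter_union_sdiff]
  rw [hunion, hsplit]
  abel

theorem map_biUnion_finset (hx : IsObservable u n x) {D : ℕ → Set (Fin n → ℝ)}
    (hD : ∀ m, MeasurableSet (D m)) (hdisj : Pairwise (Disjoint on D)) (F : Finset ℕ) :
    x (⋃ m ∈ F, D m) = ∑ m ∈ F, x (D m) := by
  classical
  induction F using Finset.induction_on with
  | empty => simpa using hx.map_empty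
  | insert a F ha ih =>
    rw [Finset.sum_insert ha, Finset.set_biUnion_insert, ← ih,
      hx.map_union (hD a) (F.measurableSet_biUnion fun b _ => hD b)]
    exact disjoint_iUnion₂_right.mpr fun m hm => hdisj fun h => ha (h ▸ hm)

end IsObservable

theorem Prod.Lex.exists_fst_eq_of_isLUB {G : Type*} [AddCommGroup G] [PartialOrder G]
    [IsOrderedAddMonoid G] {S : Set (ℤ ×ₗ G)} {b : ℤ ×ₗ G} (hb : IsLUB S b) :
    ∃ y ∈ S, (ofLex y).1 = (ofLex b).1 := by
  by_contra! hne
  have hlt : ∀ y ∈ S, (ofLex y).1 < (ofLex b).1 := fun y hy =>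
    (Prod.Lex.monotone_fst _ _ (hb.1 hy)).lt_of_ne (hne y hy)
  -- every `toLex (b.1, g)` bounds `S`, so `b.2` is a least element of `G`, which forces `G = 0`
  have hbot : ∀ g : G, (ofLex b).2 ≤ g := fun g => by
    have hub : toLex ((ofLex b).1, g) ∈ upperBounds S := fun y hy =>
      Prod.Lex.toLex_le_toLex.mpr (Or.inl (hlt y hy))
    simpa [Prod.Lex.le_iff] using hb.2 hub
  have hzero : ∀ g : G, g = 0 := fun g => le_antisymm
    (by simpa using hbot ((ofLex b).2 - g)) (by simpa using hbot ((ofLex b).2 + g))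
  have hub : toLex ((ofLex b).1 - 1, (0 : G)) ∈ upperBounds S := fun y hy => by
    rcases (Int.le_sub_one_of_lt (hlt y hy)).lt_or_eq with hy1 | hy1
    · exact Prod.Lex.toLex_le_toLex.mpr (Or.inl hy1)
    · exact Prod.Lex.toLex_le_toLex.mpr (Or.inr ⟨hy1, (hzero _).le⟩)
  have := Prod.Lex.monotone_fst _ _ (hb.2 hub)
  simp at this

namespace IsObservable

variable {G : Type*} [AddCommGroup G] [Lattice G]
variable {u : ℤ} {n : ℕ} {x : Set (Fin n → ℝ) → ℤ ×ₗ G} {A : Set (Fin n → ℝ)}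

theorem fst_nonneg (hx : IsObservable u n x) (hA : MeasurableSet A) : 0 ≤ (ofLex (x A)).1 :=
  Prod.Lex.monotone_fst _ _ (hx.nonneg hA)

theorem fst_le (hx : IsObservable u n x) (hA : MeasurableSet A) : (ofLex (x A)).1 ≤ u :=
  Prod.Lex.monotone_fst _ _ (hx.le_top hA)

variable [IsOrderedAddMonoid G]

theorem exists_fst_iUnion_le (hx : IsObservable u n x) {C : ℕ → Set (Fin n → ℝ)}
    (hmono : Monotone C) (hC : ∀ m, MeasurableSet (C m)) :
    ∃ N, (ofLex (x (⋃ m, C m))).1 ≤ (ofLex (x (C N))).1 := by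
  have hD : ∀ m, MeasurableSet (disjointed C m) := MeasurableSet.disjointed hC
  have hlub := hx.isLUB_iUnion hD (disjoint_disjointed C)
  rw [iUnion_disjointed] at hlub
  obtain ⟨_, ⟨F, rfl⟩, hF⟩ := Prod.Lex.exists_fst_eq_of_isLUB hlub
  obtain ⟨N, hFN⟩ := F.exists_nat_subset_range
  refine ⟨N, hF ▸ Prod.Lex.monotone_fst _ _ ?_⟩
  rw [← hx.map_biUnion_finset hD (disjoint_disjointed C)]
  refine hx.mono (F.measurableSet_biUnion fun m _ => hD m) (hC N) (iUnion₂_subset fun m hm => ?_)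
  exact (disjointed_subset C m).trans (hmono (Finset.mem_range.mp (hFN hm)).le)

theorem exists_fst_eq_zero_of_antitone (hx : IsObservable u n x) {C : ℕ → Set (Fin n → ℝ)}
    (hanti : Antitone C) (hC : ∀ m, MeasurableSet (C m)) (hempty : ⋂ m, C m = ∅) :
    ∃ N, (ofLex (x (C N))).1 = 0 := by
  obtain ⟨N, hN⟩ := hx.exists_fst_iUnion_le (C := fun m => C 0 \ C m)
    (fun a b hab => sdiff_subset_sdiff_right (hanti hab)) (fun m => (hC 0).diff (hC m))
  rw [← sdiff_iInter, hempty, sdiff_empty] at hN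
  have hsplit := congrArg (fun z => (ofLex z).1) (hx.map_union ((hC 0).diff (hC N)) (hC N)
    disjoint_sdiff_self_left)
  simp only [sdiff_union_of_subset (hanti (Nat.zero_le N))] at hsplit
  have := hx.fst_nonneg (hC N)
  exact ⟨N, by simp only [ofLex_add, Prod.fst_add] at hsplit; omega⟩

end IsObservable

namespace IsObservable

variable {G : Type*} [AddCommGroup G] [Lattice G] {u : ℤ} {n : ℕ} {x : Set (Fin n → ℝ) → ℤ ×ₗ G}

theorem mem_TSet_iff (hx : IsObservable u n x) {t : Fin n → ℝ} :
    t ∈ TSet u (specRes x) u ↔ (ofLex (x {s | ∀ i, s i < t i})).1 = u :=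
  ⟨And.right, fun h => ⟨hx.1 _ (measurableSet_setOf_forall_lt t), h⟩⟩

variable [IsOrderedAddMonoid G]

theorem isUpperSet_TSet (hx : IsObservable u n x) : IsUpperSet (TSet u (specRes x) u) := by
  intro s t hst hs
  rw [hx.mem_TSet_iff] at hs ⊢
  refine le_antisymm (hx.fst_le (measurableSet_setOf_forall_lt t)) (hs ▸ ?_)
  exact Prod.Lex.monotone_fst _ _ <| hx.mono (measurableSet_setOf_forall_lt s)
    (measurableSet_setOf_forall_lt t) fun p hp i => (hp i).trans_le (hst i)

theorem infClosed_TSet (hx : IsObservable u n x) : InfClosed (TSet u (specRes x) u) := by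
  intro s hs t ht
  rw [hx.mem_TSet_iff] at hs ht ⊢
  have hs' := measurableSet_setOf_forall_lt s
  have ht' := measurableSet_setOf_forall_lt t
  have hinter : {p : Fin n → ℝ | ∀ i, p i < (s ⊓ t) i} =
      {p | ∀ i, p i < s i} ∩ {p | ∀ i, p i < t i} := by
    ext p
    simp [forall_and]
  -- the modular law forces both the union and the intersection to the top level `u`
  have hmod := congrArg (fun z => (ofLex z).1) (hx.map_union_add_map_inter hs' ht')
  have hle := hx.fst_le (hs'.union ht')
  have hle' := hx.fst_le (hs'.inter ht')
  simp only [ofLex_add, Prod.fst_add] at hmod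
  rw [hinter]
  omega

theorem exists_mem_TSet_of_subset_iUnion (hx : IsObservable u n x) {A : Set (Fin n → ℝ)}
    (hA : MeasurableSet A) (hAu : (ofLex (x A)).1 = u) {t : ℕ → Fin n → ℝ} (ht : Monotone t)
    (hcov : A ⊆ ⋃ m, {p | ∀ i, p i < t m i}) : ∃ m, t m ∈ TSet u (specRes x) u := by
  have hC := fun m => measurableSet_setOf_forall_lt (t m)
  have hmono : Monotone fun m => {p : Fin n → ℝ | ∀ i, p i < t m i} :=
    fun a b hab p hp i => (hp i).trans_le (ht hab i)
  obtain ⟨N, hN⟩ := hx.exists_fst_iUnion_le hmono hC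
  have hAle := Prod.Lex.monotone_fst _ _ (hx.mono hA (MeasurableSet.iUnion hC) hcov)
  exact ⟨N, hx.mem_TSet_iff.mpr (le_antisymm (hx.fst_le (hC N)) (by omega))⟩

theorem TSet_nonempty (hx : IsObservable u n x) : (TSet u (specRes x) u).Nonempty := by
  have hcov : univ ⊆ ⋃ m : ℕ, {p : Fin n → ℝ | ∀ i, p i < (fun _ => (m : ℝ)) i} := by
    intro s _
    obtain ⟨M, hM⟩ := Finite.exists_le s
    obtain ⟨m, hm⟩ := exists_nat_gt M
    exact mem_iUnion.mpr ⟨m, fun i => (hM i).trans_lt hm⟩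
  obtain ⟨m, hm⟩ := hx.exists_mem_TSet_of_subset_iUnion MeasurableSet.univ (by simp [hx.2.1])
    (fun a b hab _ => Nat.cast_le.mpr hab) hcov
  exact ⟨_, hm⟩

theorem exists_mem_TSet_lt (hx : IsObservable u n x) {p : Fin n → ℝ}
    (hp : p ∈ TSet u (specRes x) u) (j : Fin n) : ∃ q ∈ TSet u (specRes x) u, q j < p j := by
  set t : ℕ → Fin n → ℝ := fun m => update p j (p j - 1 / ((m : ℝ) + 1))
  have ht : Monotone t := fun a b hab => by
    simp only [t, update_le_update_iff']
    linarith [Nat.one_div_le_one_div (α := ℝ) hab]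
  have hcov : {s : Fin n → ℝ | ∀ i, s i < p i} ⊆ ⋃ m, {s | ∀ i, s i < t m i} := by
    intro s hs
    obtain ⟨m, hm⟩ := exists_nat_one_div_lt (sub_pos.mpr (hs j))
    refine mem_iUnion.mpr ⟨m, fun i => ?_⟩
    rcases eq_or_ne i j with rfl | hij
    · simp only [t, update_self]
      linarith
    · simpa [t, hij] using hs i
  obtain ⟨m, hm⟩ := hx.exists_mem_TSet_of_subset_iUnion (measurableSet_setOf_forall_lt p)
    (hx.mem_TSet_iff.mp hp) ht hcov
  exact ⟨t m, hm, by simp only [t, update_self, sub_lt_self_iff]; positivity⟩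

theorem exists_update_notMem_TSet (hx : IsObservable u n x) (hu : 0 < u) (s : Fin n → ℝ)
    (j : Fin n) : ∃ r, update s j r ∉ TSet u (specRes x) u := by
  by_contra! hline
  set C : ℕ → Set (Fin n → ℝ) := fun m => {p | ∀ i, p i < update s j (-(m : ℝ)) i}
  have hanti : Antitone C := fun a b hab p hp i => (hp i).trans_le <| by
    rcases eq_or_ne i j with rfl | hij
    · simpa using (Nat.cast_le (α := ℝ)).mpr hab
    · simp [hij]
  have hempty : ⋂ m, C m = ∅ := by
    refine eq_empty_of_forall_notMem fun p hp => ?_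
    obtain ⟨m, hm⟩ := exists_nat_gt (-p j)
    have := mem_iInter.mp hp m j
    simp only [update_self] at this
    linarith
  obtain ⟨N, hN⟩ := hx.exists_fst_eq_zero_of_antitone hanti
    (fun m => measurableSet_setOf_forall_lt _) hempty
  have := hx.mem_TSet_iff.mp (hline (-(N : ℝ)))
  simp only [C] at hN
  omega

end IsObservable

theorem stmt_9_general {G : Type*}
    [AddCommGroup G] [Lattice G] [CovariantClass G G (· + ·) (· ≤ ·)]
    (k : ℕ) (hk : 1 ≤ k) (n : ℕ)
    (x : Set (Fin n → ℝ) → ℤ ×ₗ G) (hx : IsObservable (k : ℤ) n x) :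
    (TSet (k : ℤ) (specRes x) (k : ℤ)).Nonempty ∧
      ∃ t0 : Fin n → ℝ,
        charPts (k : ℤ) (specRes x) (k : ℤ) = {t0} ∧
        TSet (k : ℤ) (specRes x) (k : ℤ) = {p : Fin n → ℝ | ∀ i, t0 i < p i} := by
  have : IsOrderedAddMonoid G := { add_le_add_left := fun _ _ h c => add_le_add_left h c }
  have hne := hx.TSet_nonempty
  have hbdd : ∀ j, BddBelow ((fun p => p j) '' TSet (k : ℤ) (specRes x) (k : ℤ)) := fun j => by
    obtain ⟨s, hs⟩ := hne
    obtain ⟨r, hr⟩ := hx.exists_update_notMem_TSet (by omega) s j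
    exact ⟨r, lowerBounds_eval_image_of_update_notMem hx.isUpperSet_TSet hx.infClosed_TSet hs hr⟩
  obtain ⟨t0, hT⟩ := exists_eq_setOf_lt_of_isUpperSet hne hx.isUpperSet_TSet hx.infClosed_TSet
    (fun _ => hx.exists_mem_TSet_lt) hbdd
  exact ⟨hne, t0, charPts_eq_singleton_of_TSet_eq hT hne, hT⟩

theorem stmt_9 {G : Type*}
    [AddCommGroup G] [Lattice G] [CovariantClass G G (· + ·) (· ≤ ·)]
    (hG : DedekindSigmaComplete G) (k : ℕ) (hk : 1 ≤ k) (n : ℕ) (hn : 1 ≤ n)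
    (x : Set (Fin n → ℝ) → ℤ ×ₗ G) (hx : IsObservable (k : ℤ) n x) :
    (TSet (k : ℤ) (specRes x) (k : ℤ)).Nonempty ∧
      ∃ t0 : Fin n → ℝ,
        charPts (k : ℤ) (specRes x) (k : ℤ) = {t0} ∧
        TSet (k : ℤ) (specRes x) (k : ℤ) = {p : Fin n → ℝ | ∀ i, t0 i < p i} :=
  stmt_9_general k hk n x hx
end

section
/- Let x be an n-dimensional observable on the k-perfect MV-algebra M = Γ(ℤ ⋉ G,(k,0)) and let F = F_x be its spectral resolution. If i is the least nonzero integer such that T_i is nonempty, then T_i has only finitely many characteristic points. -/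
open Function Set

/-
Let `level x A ∈ ℤ` be the first coordinate of `x A`. It is monotone and finitely additive with
total mass `k`, and the σ-additivity of `x` in the lexicographic order forces the level of a lower
orthant to drop to `0` once one coordinate of its vertex is small enough.

Fix `s ∈ T_i` with characteristic point `p`. By the minimality of `i`, lower orthants with vertex
`t ≤ s` have level `0` or `i`; since levels of orthants are supermodular, the vertices `t ≤ s` of
level `i` are closed under `⊓`. Hence the orthant at `s ⊓ (p + ε)` still has level `i`, whereas
every orthant obtained by moving one coordinate of `s` below `p - ε` has level `0`. What is left
lies in the `ε`-box around `p` and has level `≥ i`. Disjoint neighbourhoods of distinct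
characteristic points therefore carry disjoint sets of level `≥ i ≥ 1`, so there are at most `k`
characteristic points.
-/

open Topology

lemma IsOrderedAddMonoid.of_addLeftMono {M : Type*} [AddCommMonoid M] [Preorder M]
    [AddLeftMono M] : IsOrderedAddMonoid M where
  add_le_add_left _ _ h c := add_le_add_left h c

lemma InfClosed.mem_of_forall_update_mem {ι α : Type*} [Fintype ι] [DecidableEq ι]
    [SemilatticeInf α] {P : Set (ι → α)} (hP : InfClosed P) {s c : ι → α} (hcs : c ≤ s)
    (hs : s ∈ P) (hc : ∀ i, update s i (c i) ∈ P) : c ∈ P := by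
  suffices ∀ J : Finset ι, J.piecewise c s ∈ P by simpa using this Finset.univ
  intro J
  induction J using Finset.induction_on with
  | empty => simpa using hs
  | insert i J hi ih =>
    have hsplit : (insert i J).piecewise c s = J.piecewise c s ⊓ update s i (c i) := by
      ext j
      rcases eq_or_ne j i with rfl | hj
      · simp [hi, hcs j]
      · by_cases hjJ : j ∈ J <;> simp [hj, hjJ, hcs j]
    rw [hsplit]
    exact hP ih (hc i)

def lowerOrthant {ι : Type*} (t : ι → ℝ) : Set (ι → ℝ) := {s | ∀ i, s i < t i}

section LowerOrthant

variable {ι : Type*}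

lemma lowerOrthant_eq_pi (t : ι → ℝ) : lowerOrthant t = univ.pi fun i => Iio (t i) := by
  ext s; simp [lowerOrthant]

lemma measurableSet_lowerOrthant [Countable ι] (t : ι → ℝ) :
    MeasurableSet (lowerOrthant t) := by
  rw [lowerOrthant_eq_pi]
  exact MeasurableSet.univ_pi fun _ => measurableSet_Iio

lemma lowerOrthant_mono : Monotone (lowerOrthant (ι := ι)) :=
  fun _ _ h _ hs i => (hs i).trans_le (h i)

lemma lowerOrthant_inf (a b : ι → ℝ) :
    lowerOrthant (a ⊓ b) = lowerOrthant a ∩ lowerOrthant b := by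
  simp only [lowerOrthant_eq_pi, Pi.inf_apply, Iio_inter_Iio.symm, pi_inter_distrib]

lemma lowerOrthant_subset_pi_Ico_union [DecidableEq ι] {s t a : ι → ℝ} (hts : t ≤ s) :
    lowerOrthant t ⊆
      (univ.pi fun j => Ico (a j) (t j)) ∪ ⋃ j, lowerOrthant (update s j (a j)) := by
  intro y hy
  by_cases hyB : ∀ j, a j ≤ y j
  · exact Or.inl fun j _ => ⟨hyB j, hy j⟩
  simp only [not_forall, not_le] at hyB
  obtain ⟨j, hj⟩ := hyB
  refine Or.inr (mem_iUnion.mpr ⟨j, fun k => ?_⟩)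
  rcases eq_or_ne k j with rfl | hk
  · simpa using hj
  · simpa [hk] using (hy k).trans_le (hts k)

end LowerOrthant

section Observable

variable {H : Type*} [AddCommGroup H] [LinearOrder H]
variable {G : Type*} [AddCommGroup G] [Lattice G]

def level {α : Type*} (x : Set α → H ×ₗ G) (A : Set α) : H := (ofLex (x A)).1

namespace IsObservable

variable {u : H} {n : ℕ} {x : Set (Fin n → ℝ) → H ×ₗ G} (hx : IsObservable u n x)
include hx

lemma apply_nonneg {A : Set (Fin n → ℝ)} (hA : MeasurableSet A) : 0 ≤ x A := (hx.1 A hA).1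

lemma mem_TSet_iff_s10 {t : Fin n → ℝ} {h : H} :
    t ∈ TSet u (specRes x) h ↔ level x (lowerOrthant t) = h :=
  ⟨fun ht => ht.2, fun ht => ⟨hx.1 _ (measurableSet_lowerOrthant t), ht⟩⟩

lemma level_nonneg {A : Set (Fin n → ℝ)} (hA : MeasurableSet A) : 0 ≤ level x A :=
  Prod.Lex.monotone_fst_ofLex (hx.apply_nonneg hA)

variable [IsOrderedAddMonoid H] [CovariantClass G G (· + ·) (· ≤ ·)]
attribute [local instance] IsOrderedAddMonoid.of_addLeftMono

lemma apply_empty : x ∅ = 0 := by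
  have hlub := (hx.2.2 (fun _ => ∅) (fun _ => .empty) fun _ _ _ => disjoint_bot_left).2
  rw [iUnion_empty] at hlub
  have h2 : x ∅ + x ∅ ≤ x ∅ := hlub.1 ⟨{0, 1}, by simp [two_nsmul]⟩
  exact le_antisymm (by simpa using h2) (hx.apply_nonneg .empty)

lemma apply_union {A B : Set (Fin n → ℝ)} (hA : MeasurableSet A) (hB : MeasurableSet B)
    (hAB : Disjoint A B) : x (A ∪ B) = x A + x B := by
  set f : ℕ → Set (Fin n → ℝ) := fun m => if m = 0 then A else if m = 1 then B else ∅
  have hf : ∀ m, MeasurableSet (f m) := by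
    intro m; dsimp only [f]; split_ifs <;> first | exact hA | exact hB | exact .empty
  have hfd : Pairwise (Disjoint on f) := by
    rintro (_ | _ | a) (_ | _ | b) hab <;> simp_all [f, onFun, hAB.symm]
  have hfU : ⋃ m, f m = A ∪ B := by
    ext y
    simp only [mem_iUnion, mem_union]
    constructor
    · rintro ⟨_ | _ | m, hm⟩ <;> simp_all [f]
    · rintro (h | h)
      exacts [⟨0, by simpa [f]⟩, ⟨1, by simpa [f]⟩]
  have hlub := (hx.2.2 f hf hfd).2
  rw [hfU] at hlub
  refine hlub.unique (IsGreatest.isLUB ⟨⟨{0, 1}, by simp [f]⟩, ?_⟩)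
  rintro _ ⟨F, rfl⟩
  calc ∑ m ∈ F, x (f m) = ∑ m ∈ F ∩ {0, 1}, x (f m) := by
        refine (Finset.sum_subset Finset.inter_subset_left fun m hmF hm => ?_).symm
        have : m ≠ 0 ∧ m ≠ 1 := by simpa [hmF] using hm
        simp [f, this.1, this.2, hx.apply_empty]
    _ ≤ ∑ m ∈ ({0, 1} : Finset ℕ), x (f m) :=
        Finset.sum_le_sum_of_subset_of_nonneg Finset.inter_subset_right
          fun m _ _ => hx.apply_nonneg (hf m)
    _ = x A + x B := by simp [f]

lemma apply_diff {A B : Set (Fin n → ℝ)} (hA : MeasurableSet A) (hB : MeasurableSet B)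
    (hAB : A ⊆ B) : x (B \ A) = x B - x A := by
  rw [eq_sub_iff_add_eq', ← hx.apply_union hA (hB.diff hA) disjoint_sdiff_right,
    union_sdiff_cancel hAB]

lemma apply_mono {A B : Set (Fin n → ℝ)} (hA : MeasurableSet A) (hB : MeasurableSet B)
    (hAB : A ⊆ B) : x A ≤ x B := by
  simpa [hx.apply_diff hA hB hAB] using hx.apply_nonneg (hB.diff hA)

lemma apply_union_le {A B : Set (Fin n → ℝ)} (hA : MeasurableSet A) (hB : MeasurableSet B) :
    x (A ∪ B) ≤ x A + x B := by
  rw [← union_sdiff_self, hx.apply_union hA (hB.diff hA) disjoint_sdiff_right]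
  exact add_le_add_right (hx.apply_mono (hB.diff hA) hB sdiff_subset) _

lemma apply_union_add_apply_inter {A B : Set (Fin n → ℝ)} (hA : MeasurableSet A)
    (hB : MeasurableSet B) : x (A ∪ B) + x (A ∩ B) = x A + x B := by
  conv_rhs => rw [← inter_union_sdiff B A, hx.apply_union (hB.inter hA) (hB.diff hA)
    (disjoint_sdiff_right.mono_left inter_subset_right)]
  rw [← union_sdiff_self, hx.apply_union hA (hB.diff hA) disjoint_sdiff_right, inter_comm]
  abel

lemma apply_biUnion_finset {ι : Type*} (s : Finset ι) {f : ι → Set (Fin n → ℝ)}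
    (hf : ∀ i ∈ s, MeasurableSet (f i)) (hd : (s : Set ι).PairwiseDisjoint f) :
    x (⋃ i ∈ s, f i) = ∑ i ∈ s, x (f i) := by
  classical
  induction s using Finset.induction_on with
  | empty => simp [hx.apply_empty]
  | insert a s ha ih =>
    rw [Finset.coe_insert] at hd
    have hfs : ∀ i ∈ s, MeasurableSet (f i) := fun i hi => hf i (Finset.mem_insert_of_mem hi)
    rw [Finset.set_biUnion_insert, Finset.sum_insert ha,
      hx.apply_union (hf a (Finset.mem_insert_self a s)) (s.measurableSet_biUnion hfs),
      ih hfs (hd.subset (subset_insert _ _))]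
    exact disjoint_iUnion₂_right.mpr fun i hi =>
      hd (mem_insert a _) (mem_insert_of_mem _ hi) (ne_of_mem_of_not_mem hi ha).symm

lemma apply_biUnion_le {ι : Type*} (s : Finset ι) {f : ι → Set (Fin n → ℝ)}
    (hf : ∀ i, MeasurableSet (f i)) : x (⋃ i ∈ s, f i) ≤ ∑ i ∈ s, x (f i) := by
  classical
  induction s using Finset.induction_on with
  | empty => simp [hx.apply_empty]
  | insert a s ha ih =>
    rw [Finset.set_biUnion_insert, Finset.sum_insert ha]
    exact (hx.apply_union_le (hf a) (s.measurableSet_biUnion fun i _ => hf i)).trans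
      (add_le_add_right ih _)

lemma isGLB_apply_of_antitone {Q : ℕ → Set (Fin n → ℝ)} (hQ : Antitone Q)
    (hQm : ∀ l, MeasurableSet (Q l)) (hQe : ⋂ l, Q l = ∅) :
    IsGLB (range fun l => x (Q l)) 0 := by
  refine ⟨by rintro _ ⟨l, rfl⟩; exact hx.apply_nonneg (hQm l), fun b hb => ?_⟩
  have hbQ : ∀ l, b ≤ x (Q l) := fun l => hb ⟨l, rfl⟩
  set A : ℕ → Set (Fin n → ℝ) := fun l => Q 0 \ Q l
  have hA : Monotone A := fun a b h => sdiff_subset_sdiff_right (hQ h)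
  have hDm : ∀ l, MeasurableSet (disjointed A l) :=
    MeasurableSet.disjointed fun l => (hQm 0).diff (hQm l)
  have hsum : ∀ L, ∑ l ∈ Finset.range (L + 1), x (disjointed A l) = x (Q 0) - x (Q L) := by
    intro L
    rw [← hx.apply_biUnion_finset _ (fun l _ => hDm l) ((disjoint_disjointed A).set_pairwise _),
      biUnion_range_succ_disjointed, hA.partialSups_eq,
      hx.apply_diff (hQm L) (hQm 0) (hQ (Nat.zero_le L))]
  have hlub := (hx.2.2 _ hDm (disjoint_disjointed A)).2
  rw [iUnion_disjointed, ← sdiff_iInter, hQe, sdiff_empty] at hlub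
  have hle : x (Q 0) ≤ x (Q 0) - b := hlub.2 <| by
    rintro _ ⟨F, rfl⟩
    calc ∑ l ∈ F, x (disjointed A l)
      _ ≤ ∑ l ∈ Finset.range (F.sup id + 1), x (disjointed A l) :=
          Finset.sum_le_sum_of_subset_of_nonneg (Finset.subset_range_sup_succ F)
            fun l _ _ => hx.apply_nonneg (hDm l)
      _ ≤ x (Q 0) - b := (hsum _).trans_le (sub_le_sub_left (hbQ _) _)
  simpa using hle

lemma level_mono {A B : Set (Fin n → ℝ)} (hA : MeasurableSet A) (hB : MeasurableSet B)
    (hAB : A ⊆ B) : level x A ≤ level x B :=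
  Prod.Lex.monotone_fst_ofLex (hx.apply_mono hA hB hAB)

lemma level_lowerOrthant_mono {a b : Fin n → ℝ} (h : a ≤ b) :
    level x (lowerOrthant a) ≤ level x (lowerOrthant b) :=
  hx.level_mono (measurableSet_lowerOrthant _) (measurableSet_lowerOrthant _)
    (lowerOrthant_mono h)

lemma level_union_le {A B : Set (Fin n → ℝ)} (hA : MeasurableSet A) (hB : MeasurableSet B) :
    level x (A ∪ B) ≤ level x A + level x B :=
  Prod.Lex.monotone_fst_ofLex (hx.apply_union_le hA hB)

lemma level_biUnion_le {ι : Type*} (s : Finset ι) {f : ι → Set (Fin n → ℝ)}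
    (hf : ∀ i, MeasurableSet (f i)) : level x (⋃ i ∈ s, f i) ≤ ∑ i ∈ s, level x (f i) :=
  (Prod.Lex.monotone_fst_ofLex (hx.apply_biUnion_le s hf)).trans_eq
    (map_sum (OrderAddMonoidHom.fstₗ H G) _ s)

lemma sum_level_le_of_pairwiseDisjoint {ι : Type*} (s : Finset ι) {f : ι → Set (Fin n → ℝ)}
    (hf : ∀ i ∈ s, MeasurableSet (f i)) (hd : (s : Set ι).PairwiseDisjoint f) :
    ∑ i ∈ s, level x (f i) ≤ u := by
  have hle := hx.apply_mono (s.measurableSet_biUnion hf) .univ (subset_univ _)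
  rw [hx.apply_biUnion_finset s hf hd, hx.2.1] at hle
  exact (map_sum (OrderAddMonoidHom.fstₗ H G) _ s).symm.trans_le (Prod.Lex.monotone_fst_ofLex hle)

lemma level_lowerOrthant_add_le (a b : Fin n → ℝ) :
    level x (lowerOrthant a) + level x (lowerOrthant b) ≤
      level x (lowerOrthant (a ⊓ b)) + level x (lowerOrthant (a ⊔ b)) := by
  have hmod := congrArg (fun z => (ofLex z).1) (hx.apply_union_add_apply_inter
    (measurableSet_lowerOrthant a) (measurableSet_lowerOrthant b))
  have hsup := hx.level_mono ((measurableSet_lowerOrthant a).union (measurableSet_lowerOrthant b))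
    (measurableSet_lowerOrthant _)
    (union_subset (lowerOrthant_mono le_sup_left) (lowerOrthant_mono le_sup_right))
  change level x _ + level x _ = level x _ + level x _ at hmod
  rw [lowerOrthant_inf, ← hmod, add_comm (level x (lowerOrthant a ∩ _))]
  exact add_le_add hsup le_rfl

lemma infClosed_setOf_le_and_level_eq {s : Fin n → ℝ} {h : H}
    (hs : level x (lowerOrthant s) = h) :
    InfClosed {t | t ≤ s ∧ level x (lowerOrthant t) = h} := by
  rintro a ⟨has, ha⟩ b ⟨hbs, hb⟩
  refine ⟨inf_le_left.trans has,
    le_antisymm (hs ▸ hx.level_lowerOrthant_mono (inf_le_left.trans has)) ?_⟩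
  have hsup : level x (lowerOrthant (a ⊔ b)) ≤ h :=
    hs ▸ hx.level_lowerOrthant_mono (sup_le has hbs)
  have hadd := hx.level_lowerOrthant_add_le a b
  rw [ha, hb] at hadd
  exact le_of_add_le_add_right (hadd.trans (add_le_add le_rfl hsup))

end IsObservable

end Observable

section IntegerLevels

variable {G : Type*} [AddCommGroup G] [Lattice G] [CovariantClass G G (· + ·) (· ≤ ·)]
attribute [local instance] IsOrderedAddMonoid.of_addLeftMono

lemma Prod.Lex.exists_pos_le_of_one_le_fst :
    ∃ b : ℤ ×ₗ G, 0 < b ∧ ∀ z : ℤ ×ₗ G, 1 ≤ (ofLex z).1 → b ≤ z := by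
  by_cases hpos : ∃ g : G, 0 < g
  · obtain ⟨g, hg⟩ := hpos
    refine ⟨toLex (0, g), Prod.Lex.toLex_lt_toLex.mpr (Or.inr ⟨rfl, hg⟩), fun z hz => ?_⟩
    exact Prod.Lex.le_iff.mpr (Or.inl (zero_lt_one.trans_le hz))
  · have hnonneg : ∀ g : G, 0 ≤ g := fun g => by
      have h0 : 0 = -g ⊔ 0 :=
        (le_sup_right : 0 ≤ -g ⊔ 0).lt_or_eq.resolve_left (hpos ⟨_, ·⟩)
      exact neg_nonpos.mp (le_sup_left.trans h0.ge)
    refine ⟨toLex (1, 0), Prod.Lex.toLex_lt_toLex.mpr (Or.inl zero_lt_one), fun z hz => ?_⟩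
    rcases hz.lt_or_eq with h | h
    · exact Prod.Lex.le_iff.mpr (Or.inl h)
    · exact Prod.Lex.le_iff.mpr (Or.inr ⟨h, hnonneg _⟩)

namespace IsObservable

variable {u : ℤ} {n : ℕ} {x : Set (Fin n → ℝ) → ℤ ×ₗ G} (hx : IsObservable u n x)
include hx

lemma exists_level_lowerOrthant_update_eq_zero (s : Fin n → ℝ) (j : Fin n) :
    ∃ r, level x (lowerOrthant (update s j r)) = 0 := by
  by_contra! hne
  obtain ⟨b, hb, hbz⟩ := Prod.Lex.exists_pos_le_of_one_le_fst (G := G)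
  set Q : ℕ → Set (Fin n → ℝ) := fun l => lowerOrthant (update s j (s j - l))
  have hQ : Antitone Q := fun a b hab =>
    lowerOrthant_mono (update_le_update_iff'.2 (by gcongr))
  have hQe : ⋂ l, Q l = ∅ := by
    refine eq_empty_of_forall_notMem fun y hy => ?_
    obtain ⟨l, hl⟩ := exists_nat_gt (s j - y j)
    have hyl := mem_iInter.mp hy l j
    simp only [update_self] at hyl
    linarith
  have hbQ : b ∈ lowerBounds (range fun l => x (Q l)) := by
    rintro _ ⟨l, rfl⟩
    have h0 := hx.level_nonneg (measurableSet_lowerOrthant (update s j (s j - l)))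
    exact hbz _ (h0.lt_of_ne (hne _).symm)
  exact hb.not_ge
    ((hx.isGLB_apply_of_antitone hQ (fun _ => measurableSet_lowerOrthant _) hQe).2 hbQ)

lemma bddBelow_setOf_update_mem_TSet {h : ℤ} (hh : 0 < h) (s : Fin n → ℝ) (j : Fin n) :
    BddBelow {r | update s j r ∈ TSet u (specRes x) h} := by
  obtain ⟨r₀, hr₀⟩ := hx.exists_level_lowerOrthant_update_eq_zero s j
  refine ⟨r₀, fun r hr => le_of_not_gt fun hlt => ?_⟩
  have hle := hx.level_lowerOrthant_mono (update_le_update_iff'.2 hlt.le : update s j r ≤ _)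
  rw [hx.mem_TSet_iff_s10.mp hr, hr₀] at hle
  exact hh.not_ge hle

lemma update_inf_mem_TSet {h : ℤ} {s : Fin n → ℝ} (hs : s ∈ TSet u (specRes x) h)
    {j : Fin n} {c : ℝ} (hc : proj u (specRes x) h s j < c) :
    update s j (s j ⊓ c) ∈ TSet u (specRes x) h := by
  rcases le_total (s j) c with hsc | hcs
  · simpa [inf_eq_left.mpr hsc] using hs
  · rw [inf_eq_right.mpr hcs]
    obtain ⟨r, hr, hrc⟩ := exists_lt_of_csInf_lt ⟨s j, by simpa using hs⟩ hc
    rw [hx.mem_TSet_iff_s10] at hs ⊢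
    exact le_antisymm (hs ▸ hx.level_lowerOrthant_mono (update_le_self_iff.2 hcs))
      (hx.mem_TSet_iff_s10.mp hr ▸ hx.level_lowerOrthant_mono (update_le_update_iff'.2 hrc.le))

lemma inf_mem_TSet {h : ℤ} {s c : Fin n → ℝ} (hs : s ∈ TSet u (specRes x) h)
    (hc : ∀ j, proj u (specRes x) h s j < c j) : s ⊓ c ∈ TSet u (specRes x) h := by
  classical
  rw [hx.mem_TSet_iff_s10] at hs ⊢
  refine ((hx.infClosed_setOf_le_and_level_eq hs).mem_of_forall_update_mem inf_le_left
    ⟨le_rfl, hs⟩ fun j => ⟨update_le_self_iff.2 inf_le_left, ?_⟩).2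
  exact hx.mem_TSet_iff_s10.mp (hx.update_inf_mem_TSet (hx.mem_TSet_iff_s10.mpr hs) (hc j))

section LeastLevel

variable {i : ℕ} (hleast : ∀ j : ℕ, 1 ≤ j → j < i → TSet u (specRes x) (j : ℤ) = ∅)
  {s : Fin n → ℝ} (hs : s ∈ TSet u (specRes x) i)
include hleast hs

lemma level_lowerOrthant_eq_zero_or_eq {t : Fin n → ℝ} (hts : t ≤ s) :
    level x (lowerOrthant t) = 0 ∨ level x (lowerOrthant t) = i := by
  have hle : level x (lowerOrthant t) ≤ i :=
    hx.mem_TSet_iff_s10.mp hs ▸ hx.level_lowerOrthant_mono hts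
  obtain ⟨m, hm⟩ := Int.eq_ofNat_of_zero_le (hx.level_nonneg (measurableSet_lowerOrthant t))
  by_contra! hne
  have ht : t ∈ TSet u (specRes x) (m : ℤ) := hx.mem_TSet_iff_s10.mpr hm
  rw [hleast m (by omega) (by omega)] at ht
  exact ht

lemma level_lowerOrthant_update_eq_zero_of_lt_proj (hi : 1 ≤ i) {j : Fin n} {r : ℝ}
    (hr : r < proj u (specRes x) i s j) : level x (lowerOrthant (update s j r)) = 0 := by
  have hbdd := hx.bddBelow_setOf_update_mem_TSet (by omega : (0 : ℤ) < i) s j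
  have hps : proj u (specRes x) i s j ≤ s j := csInf_le hbdd (by simpa using hs)
  refine (hx.level_lowerOrthant_eq_zero_or_eq hleast hs
    (update_le_self_iff.2 (hr.le.trans hps))).resolve_right fun heq => ?_
  exact hr.not_ge (csInf_le hbdd (hx.mem_TSet_iff_s10.mpr heq))

lemma exists_measurableSet_subset_le_level (hi : 1 ≤ i) {U : Set (Fin n → ℝ)}
    (hU : U ∈ 𝓝 (charPt u (specRes x) i s)) :
    ∃ B, MeasurableSet B ∧ B ⊆ U ∧ (i : ℤ) ≤ level x B := by
  classical
  set p := charPt u (specRes x) i s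
  obtain ⟨ε, hε, hball⟩ := Metric.mem_nhds_iff.mp hU
  set σ := s ⊓ fun j => p j + ε / 2
  set B := univ.pi fun j => Ico (p j - ε / 2) (σ j)
  set Q : Fin n → Set (Fin n → ℝ) := fun j => lowerOrthant (update s j (p j - ε / 2))
  have hBm : MeasurableSet B := MeasurableSet.univ_pi fun _ => measurableSet_Ico
  have hQm : ∀ j, MeasurableSet (Q j) := fun _ => measurableSet_lowerOrthant _
  have hσ : level x (lowerOrthant σ) = i :=
    hx.mem_TSet_iff_s10.mp (hx.inf_mem_TSet hs fun j => by simp only [p, charPt]; linarith)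
  have hQ : ∀ j, level x (Q j) = 0 := fun j =>
    hx.level_lowerOrthant_update_eq_zero_of_lt_proj hleast hs hi
      (by simp only [p, charPt]; linarith)
  refine ⟨B, hBm, fun y hy => hball ?_, ?_⟩
  · rw [Metric.mem_ball, dist_pi_lt_iff hε]
    intro j
    have hyj := hy j (mem_univ j)
    have hσj : σ j ≤ p j + ε / 2 := inf_le_right
    rw [Real.dist_eq, abs_sub_lt_iff]
    constructor <;> linarith [hyj.1, hyj.2]
  · calc (i : ℤ) = level x (lowerOrthant σ) := hσ.symm
      _ ≤ level x (B ∪ ⋃ j, Q j) := hx.level_mono (measurableSet_lowerOrthant σ)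
          (hBm.union (.iUnion hQm)) (lowerOrthant_subset_pi_Ico_union inf_le_left)
      _ ≤ level x B + ∑ j, level x (Q j) := (hx.level_union_le hBm (.iUnion hQm)).trans
          (add_le_add le_rfl (by simpa using hx.level_biUnion_le Finset.univ hQm))
      _ = level x B := by simp [hQ]

end LeastLevel

lemma card_mul_le_of_subset_charPts {i : ℕ} (hi : 1 ≤ i)
    (hleast : ∀ j : ℕ, 1 ≤ j → j < i → TSet u (specRes x) (j : ℤ) = ∅)
    {t : Finset (Fin n → ℝ)} (ht : (t : Set (Fin n → ℝ)) ⊆ charPts u (specRes x) i) :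
    (t.card : ℤ) * i ≤ u := by
  obtain ⟨V, hV, hVd⟩ := t.finite_toSet.t2_separation
  have hB : ∀ p ∈ t, ∃ B, MeasurableSet B ∧ B ⊆ V p ∧ (i : ℤ) ≤ level x B := by
    intro p hp
    obtain ⟨s, hs, rfl⟩ := ht hp
    exact hx.exists_measurableSet_subset_le_level hleast hs hi ((hV _).2.mem_nhds (hV _).1)
  choose! B hBm hBV hBi using hB
  calc (t.card : ℤ) * i = ∑ _p ∈ t, (i : ℤ) := by simp
    _ ≤ ∑ p ∈ t, level x (B p) := Finset.sum_le_sum hBi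
    _ ≤ u := hx.sum_level_le_of_pairwiseDisjoint t hBm (hVd.mono_on hBV)

end IsObservable

end IntegerLevels

theorem stmt_10_general {G : Type*}
    [AddCommGroup G] [Lattice G] [CovariantClass G G (· + ·) (· ≤ ·)]
    (k : ℕ) (n : ℕ)
    (x : Set (Fin n → ℝ) → ℤ ×ₗ G) (hx : IsObservable (k : ℤ) n x)
    (i : ℕ) (hi1 : 1 ≤ i)
    (hleast : ∀ j : ℕ, 1 ≤ j → j < i → TSet (k : ℤ) (specRes x) (j : ℤ) = ∅) :
    (charPts (k : ℤ) (specRes x) (i : ℤ)).Finite := by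
  by_contra hinf
  obtain ⟨t, ht, htk⟩ := Set.Infinite.exists_subset_card_eq hinf (k + 1)
  have hle := hx.card_mul_le_of_subset_charPts hi1 hleast ht
  rw [htk] at hle
  push_cast at hle
  nlinarith

theorem stmt_10 {G : Type*}
    [AddCommGroup G] [Lattice G] [CovariantClass G G (· + ·) (· ≤ ·)]
    (hG : DedekindSigmaComplete G) (k : ℕ) (hk : 1 ≤ k) (n : ℕ) (hn : 1 ≤ n)
    (x : Set (Fin n → ℝ) → ℤ ×ₗ G) (hx : IsObservable (k : ℤ) n x)
    (i : ℕ) (hi1 : 1 ≤ i) (hik : i ≤ k)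
    (hne : (TSet (k : ℤ) (specRes x) (i : ℤ)).Nonempty)
    (hleast : ∀ j : ℕ, 1 ≤ j → j < i → TSet (k : ℤ) (specRes x) (j : ℤ) = ∅) :
    (charPts (k : ℤ) (specRes x) (i : ℤ)).Finite :=
  stmt_10_general k n x hx i hi1 hleast
end
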